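/- arXiv:1601.08231 — 3 statements merged into one kernel-verified Lean document; each statement's English description precedes it below -/
import Mathlib

section
/- In any associative unital algebra with elements T_1,...,T_n satisfying the type-A braid relations and T_i^2 = 0 for all i < n, the identity (T_n T_{n-1} ⋯ T_1) · (T_n T_{n-1} ⋯ T_m) = (T_{n-1} T_{n-2} ⋯ T_{m-1}) · (T_n T_{n-1} ⋯ T_1) holds for every m with 1 < m ≤ n. -/
/-- The descending product `T_b T_{b-1} ⋯ T_a` (empty when `a > b`). -/
def downProd {A : Type} [Monoid A] (T : ℕ → A) (a b : ℕ) : A :=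
  ((List.range' a (b + 1 - a)).reverse.map T).prod

lemma downProd_empty {A : Type} [Monoid A] (T : ℕ → A) {a b : ℕ} (h : b < a) :
    downProd T a b = 1 := by
  have : b + 1 - a = 0 := by omega
  simp [downProd, this]

lemma downProd_succ {A : Type} [Monoid A] (T : ℕ → A) {a b : ℕ} (h : a ≤ b + 1) :
    downProd T a (b + 1) = T (b + 1) * downProd T a b := by
  unfold downProd
  have h1 : b + 1 + 1 - a = (b + 1 - a) + 1 := by omega
  have h2 : a + 1 * (b + 1 - a) = b + 1 := by omega
  rw [h1, List.range'_concat, h2]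
  simp

lemma downProd_split {A : Type} [Monoid A] (T : ℕ → A) {a j b : ℕ} (h1 : a ≤ j + 1)
    (h2 : j ≤ b) : downProd T a b = downProd T (j + 1) b * downProd T a j := by
  induction b, h2 using Nat.le_induction with
  | base => rw [downProd_empty T (Nat.lt_succ_self j), one_mul]
  | succ b hb ih =>
    rw [downProd_succ T (by omega), ih, downProd_succ T (by omega), mul_assoc]

lemma commute_downProd {A : Type} [Monoid A] (T : ℕ → A) {c : A} {a b : ℕ}
    (h : ∀ i, a ≤ i → i ≤ b → Commute c (T i)) : Commute c (downProd T a b) := by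
  apply Commute.list_prod_right
  intro y hy
  simp only [List.mem_map, List.mem_reverse, List.mem_range'_1] at hy
  obtain ⟨i, ⟨hi1, hi2⟩, rfl⟩ := hy
  exact h i hi1 (by omega)

lemma shift_downProd {A : Type} [Monoid A] (n : ℕ) (T : ℕ → A)
    (hbraid : ∀ i, 1 ≤ i → i + 1 ≤ n →
      T i * T (i + 1) * T i = T (i + 1) * T i * T (i + 1))
    (hcomm : ∀ i j, 1 ≤ i → i + 1 < j → j ≤ n → T i * T j = T j * T i)
    (i : ℕ) (hi1 : 1 ≤ i) (hin : i + 1 ≤ n) :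
    T i * downProd T 1 n = downProd T 1 n * T (i + 1) := by
  have hsplit : downProd T 1 n = downProd T (i + 2) n * downProd T 1 (i + 1) := by
    have := downProd_split T (a := 1) (j := i + 1) (b := n) (by omega) (by omega)
    simpa using this
  have hD : downProd T 1 (i + 1) = T (i + 1) * (T i * downProd T 1 (i - 1)) := by
    rw [downProd_succ T (by omega)]
    congr 1
    obtain ⟨i', rfl⟩ : ∃ i', i = i' + 1 := ⟨i - 1, by omega⟩
    rw [downProd_succ T (by omega)]
    simp
  have c1 : Commute (T i) (downProd T (i + 2) n) := by
    apply commute_downProd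
    intro j hj1 hj2
    exact (hcomm i j hi1 (by omega) hj2)
  have c2 : Commute (T (i + 1)) (downProd T 1 (i - 1)) := by
    apply commute_downProd
    intro j hj1 hj2
    exact (hcomm j (i + 1) hj1 (by omega) hin).symm
  calc T i * downProd T 1 n
      = T i * (downProd T (i + 2) n * (T (i + 1) * (T i * downProd T 1 (i - 1)))) := by
        rw [hsplit, hD]
    _ = downProd T (i + 2) n * ((T i * T (i + 1) * T i) * downProd T 1 (i - 1)) := by
        rw [← mul_assoc, c1.eq]
        simp only [mul_assoc]
    _ = downProd T (i + 2) n * ((T (i + 1) * T i * T (i + 1)) * downProd T 1 (i - 1)) := by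
        rw [hbraid i hi1 hin]
    _ = downProd T (i + 2) n * (T (i + 1) * (T i * (downProd T 1 (i - 1) * T (i + 1)))) := by
        simp only [mul_assoc, c2.eq]
    _ = downProd T 1 n * T (i + 1) := by
        rw [hsplit, hD]; simp only [mul_assoc]

lemma shift_many {A : Type} [Monoid A] (n : ℕ) (T : ℕ → A)
    (hbraid : ∀ i, 1 ≤ i → i + 1 ≤ n →
      T i * T (i + 1) * T i = T (i + 1) * T i * T (i + 1))
    (hcomm : ∀ i j, 1 ≤ i → i + 1 < j → j ≤ n → T i * T j = T j * T i)
    (b : ℕ) (hb : b + 1 ≤ n) : ∀ a, 1 ≤ a →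
    downProd T a b * downProd T 1 n = downProd T 1 n * downProd T (a + 1) (b + 1) := by
  induction b with
  | zero =>
    intro a ha
    rw [downProd_empty T (a := a) (b := 0) (by omega),
      downProd_empty T (a := a + 1) (b := 0 + 1) (by omega), one_mul, mul_one]
  | succ b ih =>
    intro a ha
    by_cases hab : a ≤ b + 1
    · rw [downProd_succ T hab, downProd_succ T (by omega), mul_assoc,
        ih (by omega) a ha, ← mul_assoc,
        shift_downProd n T hbraid hcomm (b + 1) (by omega) hb, mul_assoc]
    · rw [downProd_empty T (a := a) (b := b + 1) (by omega),
        downProd_empty T (a := a + 1) (b := b + 1 + 1) (by omega), one_mul, mul_one]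

/-- In any associative unital algebra with `T_1, …, T_n` satisfying the type-`A` braid
relations and `T_i^2 = 0` for `i < n`, one has, for `1 < m ≤ n`:
`(T_n ⋯ T_1)(T_n ⋯ T_m) = (T_{n-1} ⋯ T_{m-1})(T_n ⋯ T_1)`. -/
theorem descending_word_straightening (k A : Type) [CommRing k] [Ring A] [Algebra k A]
    (n : ℕ) (hn : 1 ≤ n) (T : ℕ → A)
    (hbraid : ∀ i, 1 ≤ i → i + 1 ≤ n →
      T i * T (i + 1) * T i = T (i + 1) * T i * T (i + 1))
    (hcomm : ∀ i j, 1 ≤ i → i + 1 < j → j ≤ n → T i * T j = T j * T i)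
    (hsq : ∀ i, 1 ≤ i → i ≤ n - 1 → T i ^ 2 = 0)
    (m : ℕ) (hm : 1 < m) (hmn : m ≤ n) :
    downProd T 1 n * downProd T m n = downProd T (m - 1) (n - 1) * downProd T 1 n := by
  have := shift_many n T hbraid hcomm (n - 1) (by omega) (m - 1) (by omega)
  have h1 : m - 1 + 1 = m := by omega
  have h2 : n - 1 + 1 = n := by omega
  rw [h1, h2] at this
  exact this.symm
end

section
/- NC_A(n,d) admits a length function: each nonzero word in the generators, when written in standard form T_w T_n^k T_{n-1} ⋯ T_m, has length ℓ_{A_{n-1}}(w) + k + n - m equal to the number of generator factors in the original word; in particular, any two expressions of the same nonzero element as products of generators use the same number of generators. -/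
/-- Relations of the generalized nil-Coxeter algebra `NC_A(n,d)` on generators
`T_1, …, T_n` (0-indexed by `Fin n`): type-`A_n` braid relations,
`T_i^2 = 0` for `i < n`, and `T_n^d = 0`. -/
inductive NCRel (k : Type) [CommRing k] (n d : ℕ) :
    FreeAlgebra k (Fin n) → FreeAlgebra k (Fin n) → Prop
  | braid (i j : Fin n) (h : (i : ℕ) + 1 = j) :
      NCRel k n d (FreeAlgebra.ι k i * FreeAlgebra.ι k j * FreeAlgebra.ι k i)
        (FreeAlgebra.ι k j * FreeAlgebra.ι k i * FreeAlgebra.ι k j)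
  | comm (i j : Fin n) (h : (i : ℕ) + 1 < j) :
      NCRel k n d (FreeAlgebra.ι k i * FreeAlgebra.ι k j)
        (FreeAlgebra.ι k j * FreeAlgebra.ι k i)
  | sq (i : Fin n) (h : (i : ℕ) + 1 < n) : NCRel k n d (FreeAlgebra.ι k i ^ 2) 0
  | last (i : Fin n) (h : (i : ℕ) + 1 = n) : NCRel k n d (FreeAlgebra.ι k i ^ d) 0

/-- The generalized nil-Coxeter algebra `NC_A(n,d)`. -/
abbrev NCA (k : Type) [CommRing k] (n d : ℕ) := RingQuot (NCRel k n d)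

/-- The generator `T_j` (1-indexed, for `1 ≤ j ≤ n`) of `NC_A(n,d)`. -/
noncomputable def Tg (k : Type) [CommRing k] (n d : ℕ) (j : ℕ) : NCA k n d :=
  if h : 1 ≤ j ∧ j ≤ n then
    RingQuot.mkAlgHom k (NCRel k n d) (FreeAlgebra.ι k ⟨j - 1, by omega⟩) else 1

/-- The descending product `T_{n-1} T_{n-2} ⋯ T_m` in `NC_A(n,d)`. -/
noncomputable def descT (k : Type) [CommRing k] (n d : ℕ) (m : ℕ) : NCA k n d :=
  ((List.range' m (n - m)).reverse.map (Tg k n d)).prod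

/-- The product of generators `T_{j}` along a (1-indexed) word `l`. -/
noncomputable def TwOf (k : Type) [CommRing k] (n d : ℕ) (l : List ℕ) : NCA k n d :=
  (l.map (Tg k n d)).prod

/-- The simple transposition `s_j = (j, j+1)` (1-indexed) in the symmetric group
on `{1, …, n}`, realized as `Equiv.Perm (Fin n)`. -/
def sp (n : ℕ) (j : ℕ) : Equiv.Perm (Fin n) :=
  if h : 1 ≤ j ∧ j < n then Equiv.swap ⟨j - 1, by omega⟩ ⟨j, h.2⟩ else 1

/-- `l` is a reduced word for `w ∈ S_n` in the simple transpositions `s_1, …, s_{n-1}`. -/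
def IsRedWord (n : ℕ) (w : Equiv.Perm (Fin n)) (l : List ℕ) : Prop :=
  (∀ j ∈ l, 1 ≤ j ∧ j < n) ∧ (l.map (sp n)).prod = w ∧
    ∀ l' : List ℕ, (∀ j ∈ l', 1 ≤ j ∧ j < n) → (l'.map (sp n)).prod = w →
      l.length ≤ l'.length

/-! The relations of `NC_A(n,d)` are homogeneous in the generators, so `T_j ↦ T_j X` extends to
an algebra map `NC_A(n,d) → NC_A(n,d)[X]` sending a word `T_{j₁} ⋯ T_{j_r}` to the monomial
`(T_{j₁} ⋯ T_{j_r}) X^r`. Two words representing the same nonzero element therefore have images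
with the same nonzero coefficient in degrees equal to their lengths, so the lengths agree. The
standard form `T_w T_n^k T_{n-1} ⋯ T_m` is itself a word, of length `ℓ(w) + k + (n - m)`. -/

open Polynomial

namespace NCA

variable (k : Type) [CommRing k] (n d : ℕ)

noncomputable def gradeHom : NCA k n d →ₐ[k] (NCA k n d)[X] :=
  RingQuot.liftAlgHom k ⟨FreeAlgebra.lift k
      (fun i => monomial 1 (RingQuot.mkAlgHom k (NCRel k n d) (FreeAlgebra.ι k i))), by
    intro x y h
    have hxy := RingQuot.mkAlgHom_rel k h
    cases h <;>
      simp_all only [map_mul, map_pow, map_zero, FreeAlgebra.lift_ι_apply,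
        monomial_mul_monomial, monomial_pow]⟩

theorem gradeHom_Tg {j : ℕ} (hj : 1 ≤ j ∧ j ≤ n) :
    gradeHom k n d (Tg k n d j) = monomial 1 (Tg k n d j) := by
  rw [Tg, dif_pos hj, gradeHom, RingQuot.liftAlgHom_mkAlgHom_apply, FreeAlgebra.lift_ι_apply]

theorem gradeHom_TwOf {l : List ℕ} (hl : ∀ j ∈ l, 1 ≤ j ∧ j ≤ n) :
    gradeHom k n d (TwOf k n d l) = monomial l.length (TwOf k n d l) := by
  induction l with
  | nil => simp [TwOf]
  | cons j l ih =>
    simp only [List.forall_mem_cons] at hl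
    simp only [TwOf, List.map_cons, List.prod_cons] at ih ⊢
    rw [map_mul, gradeHom_Tg k n d hl.1, ih hl.2, monomial_mul_monomial, List.length_cons,
      add_comm]

theorem length_eq_of_TwOf_eq {l₁ l₂ : List ℕ} (h₁ : ∀ j ∈ l₁, 1 ≤ j ∧ j ≤ n)
    (h₂ : ∀ j ∈ l₂, 1 ≤ j ∧ j ≤ n) (heq : TwOf k n d l₁ = TwOf k n d l₂)
    (hne : TwOf k n d l₁ ≠ 0) : l₁.length = l₂.length := by
  have hmono : monomial l₁.length (TwOf k n d l₁) = monomial l₂.length (TwOf k n d l₁) := by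
    rw [← gradeHom_TwOf k n d h₁, heq, gradeHom_TwOf k n d h₂]
  simpa [monomial_eq_monomial_iff, hne] using hmono

theorem TwOf_append (l₁ l₂ : List ℕ) :
    TwOf k n d (l₁ ++ l₂) = TwOf k n d l₁ * TwOf k n d l₂ := by
  simp [TwOf]

theorem TwOf_standardForm (lw : List ℕ) (k0 m : ℕ) :
    TwOf k n d (lw ++ List.replicate k0 n ++ (List.range' m (n - m)).reverse) =
      TwOf k n d lw * Tg k n d n ^ k0 * descT k n d m := by
  simp only [TwOf_append, descT]
  simp [TwOf]

end NCA

theorem NCA_length_function_general (k : Type) [CommRing k] (n d : ℕ) :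
    (∀ (l : List ℕ), (∀ j ∈ l, 1 ≤ j ∧ j ≤ n) → TwOf k n d l ≠ 0 →
      ∀ (w : Equiv.Perm (Fin n)) (lw : List ℕ) (k0 m : ℕ),
        IsRedWord n w lw → 1 ≤ k0 → k0 ≤ d - 1 → 1 ≤ m → m ≤ n →
        TwOf k n d l = TwOf k n d lw * Tg k n d n ^ k0 * descT k n d m →
        l.length = lw.length + k0 + (n - m)) ∧
    ∀ (l₁ l₂ : List ℕ), (∀ j ∈ l₁, 1 ≤ j ∧ j ≤ n) → (∀ j ∈ l₂, 1 ≤ j ∧ j ≤ n) →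
      TwOf k n d l₁ = TwOf k n d l₂ → TwOf k n d l₁ ≠ 0 → l₁.length = l₂.length := by
  refine ⟨?_, fun l₁ l₂ => NCA.length_eq_of_TwOf_eq k n d⟩
  intro l hl hne w lw k0 m hlw _ _ hm _ heq
  have hstd : ∀ j ∈ lw ++ List.replicate k0 n ++ (List.range' m (n - m)).reverse,
      1 ≤ j ∧ j ≤ n := by
    intro j hj
    simp only [List.mem_append, List.mem_replicate, List.mem_reverse, List.mem_range'] at hj
    rcases hj with (hj | hj) | hj
    · exact ⟨(hlw.1 j hj).1, (hlw.1 j hj).2.le⟩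
    · omega
    · omega
  rw [← NCA.TwOf_standardForm] at heq
  rw [NCA.length_eq_of_TwOf_eq k n d hl hstd heq hne]
  simp [add_assoc]

/-- `NC_A(n,d)` admits a length function: a nonzero word in the generators written in
standard form `T_w T_n^{k_0} T_{n-1} ⋯ T_m` has `ℓ_{A_{n-1}}(w) + k_0 + (n - m)`
generator factors; in particular, any two generator-expressions of the same nonzero
element have the same number of generator factors. -/
theorem NCA_length_function (k : Type) [CommRing k] (n d : ℕ) (hn : 1 ≤ n) (hd : 2 ≤ d) :
    (∀ (l : List ℕ), (∀ j ∈ l, 1 ≤ j ∧ j ≤ n) → TwOf k n d l ≠ 0 →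
      ∀ (w : Equiv.Perm (Fin n)) (lw : List ℕ) (k0 m : ℕ),
        IsRedWord n w lw → 1 ≤ k0 → k0 ≤ d - 1 → 1 ≤ m → m ≤ n →
        TwOf k n d l = TwOf k n d lw * Tg k n d n ^ k0 * descT k n d m →
        l.length = lw.length + k0 + (n - m)) ∧
    ∀ (l₁ l₂ : List ℕ), (∀ j ∈ l₁, 1 ≤ j ∧ j ≤ n) → (∀ j ∈ l₂, 1 ≤ j ∧ j ≤ n) →
      TwOf k n d l₁ = TwOf k n d l₂ → TwOf k n d l₁ ≠ 0 → l₁.length = l₂.length :=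
  NCA_length_function_general k n d
end

section
/- For any generalized Coxeter matrix M, the assignment Δ(T_i) = T_i ⊗ T_i for all i ∈ I extends to a well-defined coassociative algebra homomorphism Δ : NC(M) → NC(M) ⊗ NC(M), and Δ is cocommutative. -/
/-!
The relations of `NC(M)` equate monomials with monomials or with `0`, and such relations are
preserved by `x ↦ x ⊗ x`. Hence the elements `T_i ⊗ T_i` satisfy them, and `Δ` is the induced
map out of the quotient. Coassociativity and cocommutativity are identities between algebra
homomorphisms out of `NC(M)`, so it suffices to check them on the generators, where both sides are
`T_i ⊗ T_i ⊗ T_i`, resp. `T_i ⊗ T_i`.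
-/

/-- The alternating word `x y x y ⋯` of length `len` on two elements of a monoid. -/
def altProd {A : Type} [Monoid A] (x y : A) (len : ℕ) : A :=
  ((List.range len).map fun t => if t % 2 = 0 then x else y).prod

/-- Relations of the generalized nil-Coxeter algebra `NC(M)` of a generalized Coxeter
matrix `M : I → I → ℕ` (`M i j = 0` encodes `m_{ij} = ∞`): the braid relations
`T_i T_j T_i ⋯ = T_j T_i T_j ⋯` (`M i j` factors on each side, for `i ≠ j` with
`M i j ≠ 0`) and the order relations `T_i^{M i i} = 0`. -/
inductive GCRel (k : Type) [CommRing k] {I : Type} (M : I → I → ℕ) :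
    FreeAlgebra k I → FreeAlgebra k I → Prop
  | braid (i j : I) (h : i ≠ j) (hm : M i j ≠ 0) :
      GCRel k M (altProd (FreeAlgebra.ι k i) (FreeAlgebra.ι k j) (M i j))
        (altProd (FreeAlgebra.ι k j) (FreeAlgebra.ι k i) (M i j))
  | order (i : I) : GCRel k M (FreeAlgebra.ι k i ^ M i i) 0

/-- The generalized nil-Coxeter algebra `NC(M)`. -/
abbrev NCM (k : Type) [CommRing k] {I : Type} (M : I → I → ℕ) := RingQuot (GCRel k M)

/-- The generator `T_i` of `NC(M)`. -/
noncomputable def TgM (k : Type) [CommRing k] {I : Type} (M : I → I → ℕ) (i : I) :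
    NCM k M :=
  RingQuot.mkAlgHom k (GCRel k M) (FreeAlgebra.ι k i)

open TensorProduct

section altProd

lemma altProd_succ {A : Type} [Monoid A] (x y : A) (n : ℕ) :
    altProd x y (n + 1) = altProd x y n * if n % 2 = 0 then x else y := by
  simp [altProd, List.range_succ]

lemma map_altProd {F A B : Type} [Monoid A] [Monoid B] [FunLike F A B]
    [MonoidHomClass F A B] (f : F) (x y : A) (n : ℕ) :
    f (altProd x y n) = altProd (f x) (f y) n := by
  induction n with
  | zero => simp [altProd]
  | succ n ih => rw [altProd_succ, altProd_succ, map_mul, ih, apply_ite f]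

lemma altProd_tmul {k A B : Type} [CommSemiring k] [Semiring A] [Algebra k A]
    [Semiring B] [Algebra k B] (a c : A) (b d : B) (n : ℕ) :
    altProd (a ⊗ₜ[k] b) (c ⊗ₜ[k] d) n = altProd a c n ⊗ₜ[k] altProd b d n := by
  induction n with
  | zero => simp [altProd, Algebra.TensorProduct.one_def]
  | succ n ih =>
    rw [altProd_succ, altProd_succ, altProd_succ, ih]
    split_ifs <;> exact Algebra.TensorProduct.tmul_mul_tmul _ _ _ _

end altProd

namespace NCM

variable {k : Type} [CommRing k] {I : Type} {M : I → I → ℕ}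

lemma TgM_braid (i j : I) (h : i ≠ j) (hm : M i j ≠ 0) :
    altProd (TgM k M i) (TgM k M j) (M i j) = altProd (TgM k M j) (TgM k M i) (M i j) := by
  simpa only [map_altProd, TgM] using
    RingQuot.mkAlgHom_rel k (GCRel.braid (k := k) (M := M) i j h hm)

lemma TgM_pow_self (i : I) : TgM k M i ^ M i i = 0 := by
  simpa only [map_pow, map_zero, TgM] using
    RingQuot.mkAlgHom_rel k (GCRel.order (k := k) (M := M) i)

variable {A : Type} [Semiring A] [Algebra k A]

noncomputable def lift (t : I → A)
    (hbraid : ∀ i j, i ≠ j → M i j ≠ 0 →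
      altProd (t i) (t j) (M i j) = altProd (t j) (t i) (M i j))
    (horder : ∀ i, t i ^ M i i = 0) : NCM k M →ₐ[k] A :=
  RingQuot.liftAlgHom k ⟨FreeAlgebra.lift k t, fun x y hxy => by
    induction hxy with
    | braid i j h hm => simp only [map_altProd, FreeAlgebra.lift_ι_apply, hbraid i j h hm]
    | order i => simp only [map_pow, map_zero, FreeAlgebra.lift_ι_apply, horder i]⟩

lemma lift_TgM (t : I → A)
    (hbraid : ∀ i j, i ≠ j → M i j ≠ 0 →
      altProd (t i) (t j) (M i j) = altProd (t j) (t i) (M i j))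
    (horder : ∀ i, t i ^ M i i = 0) (i : I) : lift t hbraid horder (TgM k M i) = t i := by
  rw [lift, TgM, RingQuot.liftAlgHom_mkAlgHom_apply, FreeAlgebra.lift_ι_apply]

lemma algHom_ext {f g : NCM k M →ₐ[k] A} (h : ∀ i, f (TgM k M i) = g (TgM k M i)) : f = g :=
  RingQuot.ringQuot_ext' _ _ _ (FreeAlgebra.hom_ext (funext h))

noncomputable def comul : NCM k M →ₐ[k] NCM k M ⊗[k] NCM k M :=
  lift (fun i => TgM k M i ⊗ₜ TgM k M i)
    (fun i j h hm => by simp only [altProd_tmul, TgM_braid i j h hm])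
    (fun i => by rw [Algebra.TensorProduct.tmul_pow, TgM_pow_self, zero_tmul])

lemma comul_TgM (i : I) : comul (TgM k M i) = TgM k M i ⊗ₜ[k] TgM k M i :=
  lift_TgM _ _ _ i

lemma comul_coassoc :
    (Algebra.TensorProduct.assoc k k k (NCM k M) (NCM k M) (NCM k M)).toAlgHom.comp
        ((Algebra.TensorProduct.map comul (AlgHom.id k (NCM k M))).comp comul) =
      (Algebra.TensorProduct.map (AlgHom.id k (NCM k M)) comul).comp comul := by
  refine algHom_ext fun i => ?_
  simp [comul_TgM]

lemma comul_comm :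
    (Algebra.TensorProduct.comm k (NCM k M) (NCM k M)).toAlgHom.comp comul = comul := by
  refine algHom_ext fun i => ?_
  simp [comul_TgM]

end NCM

theorem NCM_grouplike_coproduct_general (k : Type) [CommRing k]
    (I : Type) (M : I → I → ℕ) :
    ∃ Δ : NCM k M →ₐ[k] NCM k M ⊗[k] NCM k M,
      (∀ i : I, Δ (TgM k M i) = TgM k M i ⊗ₜ[k] TgM k M i) ∧
      (∀ x : NCM k M,
        TensorProduct.assoc k (NCM k M) (NCM k M) (NCM k M)
            (TensorProduct.map Δ.toLinearMap LinearMap.id (Δ x)) =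
          TensorProduct.map LinearMap.id Δ.toLinearMap (Δ x)) ∧
      (∀ x : NCM k M, TensorProduct.comm k (NCM k M) (NCM k M) (Δ x) = Δ x) :=
  -- `Algebra.TensorProduct.assoc`, `.map` and `.comm` unfold to their linear counterparts.
  ⟨NCM.comul, NCM.comul_TgM, fun x => DFunLike.congr_fun NCM.comul_coassoc x,
    fun x => DFunLike.congr_fun NCM.comul_comm x⟩

open TensorProduct in
/-- For any generalized Coxeter matrix `M`, the assignment `Δ(T_i) = T_i ⊗ T_i`
extends to a well-defined coassociative, cocommutative algebra homomorphism
`Δ : NC(M) → NC(M) ⊗ NC(M)`. -/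
theorem NCM_grouplike_coproduct (k : Type) [CommRing k]
    (I : Type) [Fintype I] (M : I → I → ℕ)
    (hsymm : ∀ i j, M i j = M j i) (hdiag : ∀ i, 2 ≤ M i i)
    (hoff : ∀ i j, i ≠ j → M i j = 0 ∨ 2 ≤ M i j) :
    ∃ Δ : NCM k M →ₐ[k] NCM k M ⊗[k] NCM k M,
      (∀ i : I, Δ (TgM k M i) = TgM k M i ⊗ₜ[k] TgM k M i) ∧
      (∀ x : NCM k M,
        TensorProduct.assoc k (NCM k M) (NCM k M) (NCM k M)
            (TensorProduct.map Δ.toLinearMap LinearMap.id (Δ x)) =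
          TensorProduct.map LinearMap.id Δ.toLinearMap (Δ x)) ∧
      (∀ x : NCM k M, TensorProduct.comm k (NCM k M) (NCM k M) (Δ x) = Δ x) :=
  NCM_grouplike_coproduct_general k I M
end
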